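/- Let v be a unit vector in ℂ^d, ρ₀ = vv† the associated pure-state density matrix, and ρ any density matrix on ℂ^d. Then the trace distance satisfies 1 − √(Tr[ρ₀ρ]) ≤ d(ρ₀, ρ) := (1/2)‖ρ₀ − ρ‖₁, where ‖A‖₁ = Tr[√(A†A)] is the trace norm. (Lower Fuchs–van-de-Graaf inequality for a pure reference state.) -/

import Mathlib

/-!
Put `A = ρ₀ - ρ`, a traceless Hermitian matrix. Since `ρ₀` is the projection onto `v`,
`1 - F = v† A v`, and a Rayleigh quotient is bounded by the largest eigenvalue of `A`, which for a
traceless matrix is at most half the sum of the absolute eigenvalues, i.e. `(1/2)‖A‖₁`. Finally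
`1 - √F ≤ 1 - F` whenever `F ≤ 1`, and for `F > 1` the left-hand side is negative.
-/

open Matrix
open scoped ComplexOrder

/-- The trace norm `‖A‖₁ = Tr √(A†A)` of a complex matrix. -/
noncomputable def traceNorm {d : ℕ} (A : Matrix (Fin d) (Fin d) ℂ) : ℝ :=
  (((Matrix.posSemidef_conjTranspose_mul_self A).1.eigenvectorUnitary.1 *
      diagonal (((↑) : ℝ → ℂ) ∘ (√·) ∘ (Matrix.posSemidef_conjTranspose_mul_self A).1.eigenvalues) *
      (star (Matrix.posSemidef_conjTranspose_mul_self A).1.eigenvectorUnitary :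
        Matrix (Fin d) (Fin d) ℂ)).trace).re

open scoped MatrixOrder

lemma le_half_sum_abs_of_sum_eq_zero {ι : Type*} [DecidableEq ι] {s : Finset ι} {μ : ι → ℝ}
    (hμ : ∑ i ∈ s, μ i = 0) {j : ι} (hj : j ∈ s) : μ j ≤ 1 / 2 * ∑ i ∈ s, |μ i| := by
  rw [← Finset.add_sum_erase s _ hj] at hμ ⊢
  have hrest := Finset.abs_sum_le_sum_abs μ (s.erase j)
  rw [show ∑ i ∈ s.erase j, μ i = -μ j by linarith, abs_neg] at hrest
  linarith [le_abs_self (μ j)]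

lemma one_sub_sqrt_le_of_one_sub_le {x t : ℝ} (ht : 0 ≤ t) (h : 1 - x ≤ t) : 1 - √x ≤ t := by
  rcases le_total x 1 with hx | hx
  · linarith [Real.le_sqrt_self_iff.mpr hx]
  · linarith [Real.one_le_sqrt.mpr hx]

namespace Matrix

lemma trace_vecMulVec_mul {n R : Type*} [Fintype n] [CommSemiring R] (v w : n → R)
    (M : Matrix n n R) : (vecMulVec v w * M).trace = w ⬝ᵥ M *ᵥ v := by
  rw [vecMulVec_mul, trace_vecMulVec, dotProduct_comm, dotProduct_mulVec]

variable {n 𝕜 : Type*} [Fintype n] [DecidableEq n] [RCLike 𝕜] {A : Matrix n n 𝕜}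

lemma IsHermitian.trace_cfc (hA : A.IsHermitian) (f : ℝ → ℝ) :
    (cfc f A).trace = ∑ i, (f (hA.eigenvalues i) : 𝕜) := by
  rw [hA.cfc_eq, IsHermitian.cfc, Unitary.conjStarAlgAut_apply, trace_mul_cycle,
    Unitary.coe_star_mul_self, one_mul, trace_diagonal]
  rfl

lemma IsHermitian.trace_abs (hA : A.IsHermitian) :
    (CFC.abs A).trace = ∑ i, ((|hA.eigenvalues i| : ℝ) : 𝕜) := by
  simp only [CFC.abs_eq_cfc_norm A hA.isSelfAdjoint, hA.trace_cfc, Real.norm_eq_abs]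

lemma IsHermitian.re_dotProduct_mulVec_le (hA : A.IsHermitian) {c : ℝ}
    (hc : ∀ i, hA.eigenvalues i ≤ c) (v : n → 𝕜) :
    RCLike.re (star v ⬝ᵥ A *ᵥ v) ≤ c * RCLike.re (star v ⬝ᵥ v) := by
  have hle : A ≤ algebraMap ℝ (Matrix n n 𝕜) c := by
    refine le_algebraMap_of_spectrum_le fun x hx => ?_
    obtain ⟨i, rfl⟩ := hA.spectrum_real_eq_range_eigenvalues ▸ hx
    exact hc i
  have hnonneg := (le_iff.mp hle).dotProduct_mulVec_nonneg v
  rw [Algebra.algebraMap_eq_smul_one, sub_mulVec, smul_mulVec, one_mulVec, dotProduct_sub,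
    dotProduct_smul, sub_nonneg, RCLike.le_iff_re_im] at hnonneg
  simpa [RCLike.smul_re] using hnonneg.1

lemma IsHermitian.re_dotProduct_mulVec_le_half_re_trace_abs (hA : A.IsHermitian)
    (htr : A.trace = 0) {v : n → 𝕜} (hv : star v ⬝ᵥ v = 1) :
    RCLike.re (star v ⬝ᵥ A *ᵥ v) ≤ 1 / 2 * RCLike.re (CFC.abs A).trace := by
  have hμ : ∑ i, hA.eigenvalues i = 0 := by
    rw [hA.trace_eq_sum_eigenvalues] at htr
    exact_mod_cast htr
  have hbound := hA.re_dotProduct_mulVec_le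
    (fun i => le_half_sum_abs_of_sum_eq_zero hμ (Finset.mem_univ i)) v
  rw [hv, RCLike.one_re, mul_one] at hbound
  rw [hA.trace_abs]
  exact_mod_cast hbound

end Matrix

lemma traceNorm_eq_re_trace_abs {d : ℕ} (A : Matrix (Fin d) (Fin d) ℂ) :
    traceNorm A = (CFC.abs A).trace.re := by
  rw [traceNorm, CFC.abs, CFC.sqrt_eq_real_sqrt _, cfcₙ_eq_cfc,
    IsHermitian.cfc_eq (A := star A * A) (posSemidef_conjTranspose_mul_self A).1]
  rfl

lemma traceNorm_nonneg {d : ℕ} (A : Matrix (Fin d) (Fin d) ℂ) : 0 ≤ traceNorm A := by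
  rw [traceNorm_eq_re_trace_abs]
  exact (Complex.le_def.mp (CFC.abs_nonneg A).posSemidef.trace_nonneg).1

/-- Lower Fuchs–van-de-Graaf inequality for a pure reference state:
`1 - √(Tr[vv† ρ]) ≤ (1/2)‖vv† - ρ‖₁` for any unit vector `v` and density matrix `ρ`. -/
theorem one_sub_sqrt_fidelity_le_trace_distance {d : ℕ} (v : Fin d → ℂ)
    (hv : star v ⬝ᵥ v = 1)
    (ρ : Matrix (Fin d) (Fin d) ℂ) (hρ : ρ.PosSemidef) (hρtr : ρ.trace = 1) :
    1 - Real.sqrt (((vecMulVec v (star v) * ρ).trace).re) ≤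
      (1 / 2) * traceNorm (vecMulVec v (star v) - ρ) := by
  set A := vecMulVec v (star v) - ρ
  have hA : A.IsHermitian := (posSemidef_vecMulVec_self_star v).isHermitian.sub hρ.isHermitian
  have htrA : A.trace = 0 := by
    rw [trace_sub, trace_vecMulVec, dotProduct_comm, hv, hρtr, sub_self]
  have hfidelity : (vecMulVec v (star v) * ρ).trace = 1 - star v ⬝ᵥ A *ᵥ v := by
    rw [trace_vecMulVec_mul, sub_mulVec, dotProduct_sub, vecMulVec_mulVec, hv,
      MulOpposite.op_one, one_smul, hv, sub_sub_cancel]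
  apply one_sub_sqrt_le_of_one_sub_le (by linarith [traceNorm_nonneg A])
  rw [hfidelity, Complex.sub_re, Complex.one_re, sub_sub_cancel, traceNorm_eq_re_trace_abs]
  exact hA.re_dotProduct_mulVec_le_half_re_trace_abs htrA hv
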